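/- Let G be a one-ended finitely generated group. Then the complement of the identity element, G − {1}, has exactly one infinite connected component and at most finitely many finite components, and there exists a ball D of radius d around 1 such that any two points on the boundary of a suitable ball C ⊆ D are joined by a path lying in the infinite component of G − {1} and contained in D. -/

import Mathlib

/-- A finite symmetric generating set for a group, inducing the word metric. -/
structure GenSet (G : Type*) [Group G] where
  carrier : Finset G
  symm : ∀ a ∈ carrier, a⁻¹ ∈ carrier
  gen : Subgroup.closure (carrier : Set G) = ⊤

namespace GenSet

variable {G : Type*} [Group G] (S : GenSet G)

/-- Adjacency in the Cayley graph. -/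
def adj (g h : G) : Prop := g⁻¹ * h ∈ S.carrier

/-- The word metric: the least length of a word in the generators carrying `g` to `h`. -/
noncomputable def dist (g h : G) : ℕ :=
  sInf {n | ∃ w : List G, (∀ a ∈ w, a ∈ S.carrier) ∧ w.length = n ∧ g * w.prod = h}

/-- The ball of radius `r` about `c` in the word metric. -/
def ball (c : G) (r : ℕ) : Set G := {g | S.dist c g ≤ r}

/-- `C` separates `A` from `B` if every path (finite sequence of points, each at distance
one from its successor) from `A` to `B` meets `C`. -/
def Separates (C A B : Set G) : Prop :=
  ∀ (l : List G) (hl : l ≠ []), l.Chain' S.adj → l.head hl ∈ A → l.getLast hl ∈ B →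
    ∃ x ∈ l, x ∈ C

/-- A group is narrow if there is an integer `i` such that every ball is separated from all
but finitely many balls of the same radius by a set of size at most `i`. -/
def Narrow : Prop :=
  ∃ i : ℕ, ∀ (r : ℕ) (c : G),
    {c' : G | ¬ ∃ C : Finset G, C.card ≤ i ∧
      S.Separates (↑C) (S.ball c r) (S.ball c' r)}.Finite

/-- Two points are connected within `A` if some path inside `A` joins them. -/
def ConnIn (A : Set G) (g h : G) : Prop :=
  ∃ (l : List G) (hl : l ≠ []), l.Chain' S.adj ∧ (∀ x ∈ l, x ∈ A) ∧
    l.head hl = g ∧ l.getLast hl = h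

/-- The connected component of `g` inside the set `A`. -/
def comp (A : Set G) (g : G) : Set G := {h | S.ConnIn A g h}

/-- A group is one-ended if for every radius `r` the complement of the ball of radius `r`
about the identity has exactly one infinite connected component. -/
def OneEnded : Prop :=
  ∀ r : ℕ, ∃ g ∈ (S.ball 1 r)ᶜ, (S.comp (S.ball 1 r)ᶜ g).Infinite ∧
    ∀ h ∈ (S.ball 1 r)ᶜ, (S.comp (S.ball 1 r)ᶜ h).Infinite →
      S.comp (S.ball 1 r)ᶜ h = S.comp (S.ball 1 r)ᶜ g

-- auxiliary lemmas


lemma exists_word (g : G) : ∃ w : List G, (∀ a ∈ w, a ∈ S.carrier) ∧ w.prod = g := by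
  let T : Subgroup G :=
    { carrier := {g | ∃ w : List G, (∀ a ∈ w, a ∈ S.carrier) ∧ w.prod = g}
      one_mem' := ⟨[], by simp, by simp⟩
      mul_mem' := by
        rintro a b ⟨w1, h1, rfl⟩ ⟨w2, h2, rfl⟩
        refine ⟨w1 ++ w2, ?_, by simp⟩
        intro x hx
        rcases List.mem_append.1 hx with h | h
        exacts [h1 x h, h2 x h]
      inv_mem' := by
        rintro a ⟨w, hw, rfl⟩
        refine ⟨(w.map fun x => x⁻¹).reverse, ?_, (List.prod_inv_reverse w).symm⟩
        intro x hx
        rw [List.mem_reverse, List.mem_map] at hx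
        obtain ⟨y, hy, rfl⟩ := hx
        exact S.symm y (hw y hy) }
  have : (S.carrier : Set G) ⊆ T.carrier := fun a ha => ⟨[a], by simpa using ha, by simp⟩
  have hT : Subgroup.closure (S.carrier : Set G) ≤ T := (Subgroup.closure_le T).2 this
  rw [S.gen] at hT
  exact hT (Subgroup.mem_top g)

lemma distSet_nonempty (g h : G) :
    {n | ∃ w : List G, (∀ a ∈ w, a ∈ S.carrier) ∧ w.length = n ∧ g * w.prod = h}.Nonempty := by
  obtain ⟨w, hw, hp⟩ := S.exists_word (g⁻¹ * h)
  exact ⟨w.length, w, hw, rfl, by rw [hp]; group⟩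

lemma dist_spec (g h : G) :
    ∃ w : List G, (∀ a ∈ w, a ∈ S.carrier) ∧ w.length = S.dist g h ∧ g * w.prod = h :=
  Nat.sInf_mem (S.distSet_nonempty g h)

lemma dist_le (g h : G) (w : List G) (hw : ∀ a ∈ w, a ∈ S.carrier) (hp : g * w.prod = h) :
    S.dist g h ≤ w.length :=
  Nat.sInf_le ⟨w, hw, rfl, hp⟩

lemma dist_one_self : S.dist 1 (1 : G) = 0 :=
  Nat.le_zero.1 (by simpa using S.dist_le 1 1 [] (by simp) (by simp))

lemma eq_one_of_dist_zero {g : G} (h : S.dist 1 g = 0) : g = 1 := by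
  obtain ⟨w, _, hlen, hp⟩ := S.dist_spec 1 g
  rw [h, List.length_eq_zero_iff] at hlen
  subst hlen; simpa using hp.symm

lemma ball_one_zero_compl : (S.ball 1 0)ᶜ = {g : G | g ≠ 1} := by
  ext g
  simp only [ball, Set.mem_compl_iff, Set.mem_setOf_eq, Nat.le_zero]
  constructor
  · intro h h1; subst h1; exact h S.dist_one_self
  · intro h h0; exact h (S.eq_one_of_dist_zero h0)

lemma ball_finite (r : ℕ) : (S.ball (1 : G) r).Finite := by
  classical
  have hfin : {l : List ↥S.carrier | l.length ≤ r}.Finite := List.finite_length_le _ r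
  have : S.ball (1 : G) r ⊆
      (fun l : List ↥S.carrier => (l.map Subtype.val).prod) ''
        {l : List ↥S.carrier | l.length ≤ r} := by
    intro g hg
    obtain ⟨w, hw, hlen, hp⟩ := S.dist_spec 1 g
    refine ⟨w.attach.map fun x => (⟨x.1, hw x.1 x.2⟩ : ↥S.carrier), ?_, ?_⟩
    · simpa [hlen] using (show S.dist 1 g ≤ r from hg)
    · have h2 : (w.attach.map fun x => (⟨x.1, hw x.1 x.2⟩ : ↥S.carrier)).map Subtype.val = w := by
        rw [List.map_map]
        rw [show (Subtype.val ∘ fun x : {a // a ∈ w} => (⟨x.1, hw x.1 x.2⟩ : ↥S.carrier)) = fun x : {a // a ∈ w} => (x : G) from rfl]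
        simpa using List.attach_map_coe w id
      simp only [h2]
      simpa using hp
  exact (hfin.image _).subset this


lemma adj_symm {g h : G} (hx : S.adj g h) : S.adj h g := by
  have := S.symm _ hx
  simpa [adj, mul_inv_rev] using this

lemma connIn_refl {A : Set G} {g : G} (hg : g ∈ A) : S.ConnIn A g g :=
  ⟨[g], by simp, List.isChain_singleton g, by simpa using hg, rfl, rfl⟩

lemma connIn_mem_left {A : Set G} {g h : G} (h1 : S.ConnIn A g h) : g ∈ A := by
  obtain ⟨l, hl, _, hmem, hh, _⟩ := h1
  exact hh ▸ hmem _ (List.head_mem hl)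

lemma connIn_mem_right {A : Set G} {g h : G} (h1 : S.ConnIn A g h) : h ∈ A := by
  obtain ⟨l, hl, _, hmem, _, hh⟩ := h1
  exact hh ▸ hmem _ (List.getLast_mem hl)

lemma connIn_symm {A : Set G} {g h : G} (h1 : S.ConnIn A g h) : S.ConnIn A h g := by
  obtain ⟨l, hl, hc, hmem, hhd, hlast⟩ := h1
  have hrl : l.reverse ≠ [] := by simpa using hl
  refine ⟨l.reverse, hrl, ?_, ?_, ?_, ?_⟩
  · apply List.isChain_reverse.2
    exact hc.imp fun a b hab => S.adj_symm hab
  · intro x hx; exact hmem x (List.mem_reverse.1 hx)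
  · rw [List.head_reverse]; exact hlast
  · rw [List.getLast_reverse]; exact hhd

lemma connIn_trans {A : Set G} {g h k : G} (h1 : S.ConnIn A g h) (h2 : S.ConnIn A h k) :
    S.ConnIn A g k := by
  obtain ⟨l1, hl1, hc1, hmem1, hhd1, hlast1⟩ := h1
  obtain ⟨l2, hl2, hc2, hmem2, hhd2, hlast2⟩ := h2
  have hne : l1 ++ l2.tail ≠ [] := fun hcon => hl1 (List.append_eq_nil_iff.1 hcon).1
  refine ⟨l1 ++ l2.tail, hne, ?_, ?_, ?_, ?_⟩
  · refine List.IsChain.append hc1 (hc2.tail) ?_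
    intro x hx y hy
    rw [List.getLast?_eq_getLast_of_ne_nil hl1, Option.mem_some_iff] at hx
    subst hx
    rw [hlast1, ← hhd2]
    obtain ⟨a, t, rfl⟩ := List.exists_cons_of_ne_nil hl2
    simp only [List.tail_cons] at hy
    rcases List.isChain_cons.1 hc2 with ⟨hadj, _⟩
    exact hadj y hy
  · intro x hx
    rcases List.mem_append.1 hx with hx | hx
    exacts [hmem1 x hx, hmem2 x (List.mem_of_mem_tail hx)]
  · rw [List.head_append_of_ne_nil hl1]; exact hhd1
  · have hq : (l1 ++ l2.tail).getLast? = some k := by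
      rcases eq_or_ne l2.tail [] with ht | ht
      · rw [List.getLast?_append, ht]
        show Option.or none l1.getLast? = some k
        rw [Option.none_or, List.getLast?_eq_getLast_of_ne_nil hl1, hlast1, ← hhd2, ← hlast2]
        obtain ⟨a, t, rfl⟩ := List.exists_cons_of_ne_nil hl2
        simp only [List.tail_cons] at ht
        subst ht
        simp
      · rw [List.getLast?_append, List.getLast?_eq_getLast_of_ne_nil ht]
        have : l2.tail.getLast ht = k := by
          rw [← hlast2]
          obtain ⟨a, t, rfl⟩ := List.exists_cons_of_ne_nil hl2
          simp only [List.tail_cons] at ht ⊢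
          exact (List.getLast_cons ht).symm
        rw [this]
        rfl
    rw [List.getLast?_eq_getLast_of_ne_nil hne] at hq
    exact Option.some_injective _ hq

lemma comp_eq_of_mem {A : Set G} {g h : G} (hm : h ∈ S.comp A g) :
    S.comp A h = S.comp A g := by
  ext k
  exact ⟨fun hk => S.connIn_trans hm hk, fun hk => S.connIn_trans (S.connIn_symm hm) hk⟩

lemma mem_comp_of_mem_path {A : Set G} {g z : G} (l : List G) (hl : l ≠ [])
    (hc : l.Chain' S.adj) (hmem : ∀ x ∈ l, x ∈ A) (hhd : l.head hl = g) (hz : z ∈ l) :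
    z ∈ S.comp A g := by
  obtain ⟨t1, t2, rfl⟩ := List.append_of_mem hz
  have hpre : (t1 ++ [z]) <+: (t1 ++ z :: t2) := ⟨t2, by simp⟩
  have hne : t1 ++ [z] ≠ [] := by simp
  refine ⟨t1 ++ [z], hne, hc.prefix hpre, ?_, ?_, ?_⟩
  · intro x hx; exact hmem x (hpre.subset hx)
  · rw [← hhd]
    rcases eq_or_ne t1 [] with rfl | ht
    · simp
    · rw [List.head_append_of_ne_nil ht, List.head_append_of_ne_nil ht]
  · simp

lemma path_of_word (g : G) (w : List G) (hw : ∀ a ∈ w, a ∈ S.carrier) :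
    ∃ l : List G, (g :: l).Chain' S.adj ∧
      (g :: l).getLast (by simp) = g * w.prod ∧
      ∀ z ∈ l, ∃ u : List G, u ≠ [] ∧ u <+: w ∧ z = g * u.prod := by
  induction w generalizing g with
  | nil => exact ⟨[], List.isChain_singleton g, by simp, by simp⟩
  | cons a t ih =>
    obtain ⟨l, hc, hlast, hmem⟩ := ih (g * a) (fun b hb => hw b (List.mem_cons_of_mem a hb))
    refine ⟨(g * a) :: l, ?_, ?_, ?_⟩
    · apply List.isChain_cons_cons.2
      refine ⟨?_, hc⟩
      show g⁻¹ * (g * a) ∈ S.carrier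
      simpa using hw a (List.mem_cons_self (a := a) (l := t))
    · rw [List.getLast_cons (by simp : (g * a) :: l ≠ [])]
      rw [hlast]
      simp [mul_assoc]
    · intro z hz
      rcases List.mem_cons.1 hz with rfl | hz
      · exact ⟨[a], by simp, ⟨t, rfl⟩, by simp⟩
      · obtain ⟨u, hu, hupre, hzu⟩ := hmem z hz
        exact ⟨a :: u, by simp, by simpa using hupre, by simp [hzu, mul_assoc]⟩


lemma comp_touch (h : G) (hh : h ≠ 1) :
    ∃ z : G, S.dist 1 z = 1 ∧ S.comp {g : G | g ≠ 1} h = S.comp {g : G | g ≠ 1} z := by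
  obtain ⟨w, hw, hlen, hp⟩ := S.dist_spec 1 h
  rw [one_mul] at hp
  have hkey : ∀ u : List G, u ≠ [] → u <+: w → u.prod ≠ 1 := by
    rintro u hu ⟨v, rfl⟩ hu1
    have hv : ∀ a ∈ v, a ∈ S.carrier := fun a ha => hw a (List.mem_append_right u ha)
    have : S.dist 1 h ≤ v.length :=
      S.dist_le 1 h v hv (by rw [one_mul, ← hp, List.prod_append, hu1, one_mul])
    rw [← hlen, List.length_append] at this
    have : u.length = 0 := by omega
    exact hu (List.length_eq_zero_iff.1 this)
  obtain ⟨l, hc, hlast, hmem⟩ := S.path_of_word 1 w hw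
  have hl : l ≠ [] := by
    intro hcon
    subst hcon
    simp only [List.getLast_singleton, one_mul] at hlast
    rw [← hlast] at hp
    exact hh (hp ▸ hlast ▸ rfl)
  have hlne1 : ∀ z ∈ l, z ≠ 1 := by
    intro z hz
    obtain ⟨u, hu, hupre, rfl⟩ := hmem z hz
    rw [one_mul]
    exact hkey u hu hupre
  have hchain : l.Chain' S.adj := (List.isChain_cons.1 hc).2
  have hadj : S.adj 1 (l.head hl) := by
    have := (List.isChain_cons.1 hc).1
    exact this _ (by simp [List.head?_eq_head hl])
  have hz1 : S.dist 1 (l.head hl) = 1 := by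
    have hle : S.dist 1 (l.head hl) ≤ 1 := by
      have : (1 : G) * [l.head hl].prod = l.head hl := by simp
      simpa using S.dist_le 1 (l.head hl) [l.head hl]
        (by simpa using (by simpa [adj] using hadj : l.head hl ∈ S.carrier)) this
    have hne : S.dist 1 (l.head hl) ≠ 0 := fun h0 =>
      hlne1 _ (List.head_mem hl) (S.eq_one_of_dist_zero h0)
    omega
  refine ⟨l.head hl, hz1, ?_⟩
  have hconn : S.ConnIn {g : G | g ≠ 1} (l.head hl) h := by
    refine ⟨l, hl, hchain, fun x hx => hlne1 x hx, rfl, ?_⟩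
    rw [List.getLast_cons hl] at hlast
    rw [hlast, one_mul, hp]
  exact (S.comp_eq_of_mem (S.connIn_symm hconn)).symm

open scoped Classical in
noncomputable def pathBetween (A : Set G) (x y : G) : List G :=
  if h : S.ConnIn A x y then h.choose else []

lemma pathBetween_spec {A : Set G} {x y : G} (h : S.ConnIn A x y) :
    ∃ hl : S.pathBetween A x y ≠ [], (S.pathBetween A x y).Chain' S.adj ∧
      (∀ a ∈ S.pathBetween A x y, a ∈ A) ∧ (S.pathBetween A x y).head hl = x ∧
      (S.pathBetween A x y).getLast hl = y := by
  unfold pathBetween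
  rw [dif_pos h]
  exact h.choose_spec


end GenSet

/-- A group is virtually free if it has a free subgroup of finite index. -/
def VirtuallyFree (G : Type*) [Group G] : Prop :=
  ∃ H : Subgroup G, H.FiniteIndex ∧ IsFreeGroup H

/-- A group is virtually cyclic if it has a cyclic subgroup of finite index. -/
def VirtuallyCyclic (G : Type*) [Group G] : Prop :=
  ∃ H : Subgroup G, H.FiniteIndex ∧ IsCyclic H

/-- A (finitely generable) group is one-ended if it is so with respect to some
(equivalently, any) word metric. -/
def OneEndedGroup (G : Type*) [Group G] : Prop := ∃ S : GenSet G, S.OneEnded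

/-- In a one-ended finitely generated group, the complement of the identity has exactly
one infinite component and only finitely many (finite) components, all finite components
lie in some ball `C` of radius `c ≥ 1` around `1`, and any two points on the boundary of
`C` are joined by a path lying in the infinite component and inside a ball `D` of
radius `d ≥ c` around `1`. -/
theorem oneEnded_complement_of_identity {G : Type*} [Group G] (S : GenSet G)
    (hone : S.OneEnded) :
    ∃ K : Set G, K ⊆ {g : G | g ≠ 1} ∧ K.Infinite ∧
      (∃ g : G, g ≠ 1 ∧ K = S.comp {g : G | g ≠ 1} g) ∧
      (∀ h : G, h ≠ 1 → (S.comp {g : G | g ≠ 1} h).Infinite →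
        S.comp {g : G | g ≠ 1} h = K) ∧
      {B : Set G | (∃ h : G, h ≠ 1 ∧ B = S.comp {g : G | g ≠ 1} h) ∧ B.Finite}.Finite ∧
      ∃ c d : ℕ, 1 ≤ c ∧ c ≤ d ∧
        (∀ h : G, h ≠ 1 → (S.comp {g : G | g ≠ 1} h).Finite →
          S.comp {g : G | g ≠ 1} h ⊆ S.ball 1 c) ∧
        ∀ x y : G, S.dist 1 x = c → S.dist 1 y = c →
          ∃ (l : List G) (hl : l ≠ []), l.Chain' S.adj ∧ l.head hl = x ∧
            l.getLast hl = y ∧ ∀ z ∈ l, z ∈ K ∧ S.dist 1 z ≤ d := by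
  classical
  obtain ⟨g0, hg0A, hg0inf, hg0uniq⟩ := hone 0
  rw [S.ball_one_zero_compl] at hg0A hg0inf hg0uniq
  set A : Set G := {g : G | g ≠ 1} with hAdef
  -- finiteness of the collection of components
  have hsph1 : {z : G | S.dist 1 z = 1}.Finite :=
    (S.ball_finite 1).subset fun z hz => le_of_eq hz
  have hsub : {B : Set G | (∃ h : G, h ≠ 1 ∧ B = S.comp A h) ∧ B.Finite} ⊆
      (S.comp A) '' {z : G | S.dist 1 z = 1} := by
    rintro B ⟨⟨h, hh, rfl⟩, -⟩
    obtain ⟨z, hz, hcomp⟩ := S.comp_touch h hh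
    exact ⟨z, hz, hcomp.symm⟩
  have hFC : {B : Set G | (∃ h : G, h ≠ 1 ∧ B = S.comp A h) ∧ B.Finite}.Finite :=
    (hsph1.image _).subset hsub
  -- the union of the finite components
  have hUfin : (⋃ B ∈ {B : Set G | (∃ h : G, h ≠ 1 ∧ B = S.comp A h) ∧ B.Finite}, B).Finite :=
    Set.Finite.biUnion hFC fun B hB => hB.2
  set m := hUfin.toFinset.sup (S.dist 1) with hmdef
  have hmax : ∀ z ∈ ⋃ B ∈ {B : Set G | (∃ h : G, h ≠ 1 ∧ B = S.comp A h) ∧ B.Finite}, B,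
      S.dist 1 z ≤ m := fun z hz => Finset.le_sup (hUfin.mem_toFinset.2 hz)
  set c := m + 1 with hcdef
  have hfinc : ∀ h : G, h ≠ 1 → (S.comp A h).Finite → S.comp A h ⊆ S.ball 1 c := by
    intro h hh hfin z hz
    have hzU : z ∈ ⋃ B ∈ {B : Set G | (∃ h : G, h ≠ 1 ∧ B = S.comp A h) ∧ B.Finite}, B := by
      exact Set.mem_biUnion ⟨⟨h, hh, rfl⟩, hfin⟩ hz
    exact le_trans (hmax z hzU) (Nat.le_succ m)
  have hsph : ∀ x : G, S.dist 1 x = c → S.comp A x = S.comp A g0 := by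
    intro x hx
    have hx1 : x ≠ 1 := by
      intro h1
      rw [h1, S.dist_one_self] at hx
      omega
    by_cases hfin : (S.comp A x).Finite
    · exfalso
      have hxU : x ∈ ⋃ B ∈ {B : Set G | (∃ h : G, h ≠ 1 ∧ B = S.comp A h) ∧ B.Finite}, B :=
        Set.mem_biUnion ⟨⟨x, hx1, rfl⟩, hfin⟩ (S.connIn_refl hx1)
      have := hmax x hxU
      omega
    · exact hg0uniq x hx1 hfin
  -- the sphere of radius c is finite
  have hSpF : {x : G | S.dist 1 x = c}.Finite :=
    (S.ball_finite c).subset fun x hx => le_of_eq hx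
  set P : Finset G := hSpF.toFinset.biUnion
    (fun x => hSpF.toFinset.biUnion fun y => (S.pathBetween A x y).toFinset) with hPdef
  set d := max c (P.sup (S.dist 1)) with hddef
  refine ⟨S.comp A g0, fun z hz => S.connIn_mem_right hz, hg0inf, ⟨g0, hg0A, rfl⟩,
    fun h hh hinf => hg0uniq h hh hinf, hFC, c, d, Nat.succ_le_succ (Nat.zero_le m),
    le_max_left _ _, hfinc, ?_⟩
  intro x y hx hy
  have hy1 : y ≠ 1 := by
    intro h1
    rw [h1, S.dist_one_self] at hy
    omega
  have hyK : y ∈ S.comp A x := by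
    rw [hsph x hx, ← hsph y hy]
    exact S.connIn_refl hy1
  obtain ⟨hl, hchain, hmem, hhd, hlast⟩ := S.pathBetween_spec hyK
  refine ⟨S.pathBetween A x y, hl, hchain, hhd, hlast, ?_⟩
  intro z hz
  constructor
  · rw [← hsph x hx]
    exact S.mem_comp_of_mem_path _ hl hchain hmem hhd hz
  · have hzP : z ∈ P := Finset.mem_biUnion.2 ⟨x, hSpF.mem_toFinset.2 hx,
      Finset.mem_biUnion.2 ⟨y, hSpF.mem_toFinset.2 hy, List.mem_toFinset.2 hz⟩⟩
    exact le_trans (Finset.le_sup hzP) (le_max_right _ _)
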